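/- arXiv:2502.11255 — 2 statements merged into one kernel-verified Lean document; each statement's English description precedes it below -/
import Mathlib

section
/- Fix n ≥ 4 and η = (η₁, η₂, η₃, η₄, η₅) ∈ ℝ⁵, and let Ω_e(η) be the (n²−n) × (n²−n) symmetric matrix indexed by ordered pairs (i,j), i ≠ j in {1,…,n}, with entries Ω[(i,j),(i,j)] = η₁, Ω[(i,j),(j,i)] = η₂, Ω[(i,j),(i,l)] = η₃ and Ω[(i,j),(k,j)] = η₄ for k, l ∉ {i,j}, Ω[(i,j),(j,l)] = Ω[(i,j),(k,i)] = η₅ for k, l ∉ {i,j}, and Ω[(i,j),(k,l)] = 0 when {i,j} ∩ {k,l} = ∅. If Ω_e(η) is positive semidefinite then: η₁ ≥ 0; −η₁ ≤ η₂ ≤ η₁; η₅ ≥ −(η₃ + η₄)/2 − (η₂ + η₁)/(2n − 4); η₅ ≤ (η₁ + η₂ − η₃ − η₄)/2; η₅ ≥ (−η₁ + η₂ + η₃ + η₄)/2; and {(n−3)(η₃+η₄) − 2η₅ + 2η₁}² ≥ ι + κ, where ι = (η₄² + η₃²)(n² − 2n + 1) + 4η₅²(n² − 6n + 9) + 2η₃η₄(1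 − n² + 2n) and κ = η₂η₅(8n − 24) + (η₃ + η₄)η₅(12 − 4n) + 4η₂{η₂ − (η₃ + η₄)}. -/
/-- The covariance matrix `Ω_e(η)` of a weakly exchangeable dissociated latent error
array on `n` nodes, indexed by ordered pairs `(i,j)` with `i ≠ j`, with entries
`η₁` on the diagonal, `η₂` for reciprocal pairs `((i,j),(j,i))`, `η₃` for a common
sender, `η₄` for a common receiver, `η₅` for sender-receiver configurations, and `0`
for pairs of edges with disjoint node sets. -/
noncomputable def OmegaE (n : ℕ) (η₁ η₂ η₃ η₄ η₅ : ℝ) :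
    Matrix {p : Fin n × Fin n // p.1 ≠ p.2} {p : Fin n × Fin n // p.1 ≠ p.2} ℝ :=
  fun p q =>
    if p = q then η₁
    else if q.1.1 = p.1.2 ∧ q.1.2 = p.1.1 then η₂
    else if q.1.1 = p.1.1 then η₃
    else if q.1.2 = p.1.2 then η₄
    else if q.1.1 = p.1.2 ∨ q.1.2 = p.1.1 then η₅
    else 0

/-!
Every condition is the nonnegativity of `vᵀ Ω_e v` for a test vector `v` read off an `n × n`
array `x` with zero diagonal. Since `Ω_e` is a combination of the identity, the transposition
`(i,j) ↦ (j,i)` and the incidence matrices "same sender", "same receiver" and "sender of one is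
receiver of the other", this quadratic form only depends on `tr(x xᵀ)`, `tr(x²)` and the row and
column sums of `x`. Arrays on two, three and four nodes (a reciprocal pair of either sign, an
antisymmetric triangle and a symmetric alternating 4-cycle, the last two with vanishing row and
column sums) give the bounds on `η₂` and the two bounds on `η₅` free of `n`, via the restriction
of `Ω_e` to a subset of the nodes. The all-ones array gives the bound involving `2n - 4`. On the
arrays `s uᵢ + t uⱼ` with `∑ u = 0` the form is `|u|²` times a binary quadratic form in `(s, t)`,
and the last inequality is `n (n - 2)` times the nonnegativity of its determinant.
-/

open Matrix

theorem sum_ite_eq_zero_else {ι M : Type*} [Fintype ι] [DecidableEq ι] [AddCommGroup M]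
    (i : ι) (f : ι → M) : ∑ j, (if i = j then 0 else f j) = ∑ j, f j - f i := by
  rw [eq_sub_iff_add_eq, ← Fintype.sum_ite_eq i f, ← Finset.sum_add_distrib]
  exact Finset.sum_congr rfl fun j _ => by split_ifs <;> simp [*]

theorem sum_ite_eq_zero_else' {ι M : Type*} [Fintype ι] [DecidableEq ι] [AddCommGroup M]
    (i : ι) (f : ι → M) : ∑ j, (if j = i then 0 else f j) = ∑ j, f j - f i := by
  simpa only [eq_comm] using sum_ite_eq_zero_else i f

theorem sum_subtype_fst_ne_snd {ι M : Type*} [Fintype ι] [DecidableEq ι] [AddCommMonoid M]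
    {f : ι × ι → M} (hf : ∀ i, f (i, i) = 0) :
    ∑ p : {p : ι × ι // p.1 ≠ p.2}, f p = ∑ i, ∑ j, f (i, j) := by
  have hdiag : ∑ p : {p : ι × ι // ¬p.1 ≠ p.2}, f p = 0 :=
    Finset.sum_eq_zero fun ⟨⟨i, j⟩, h⟩ _ => by
      obtain rfl : i = j := not_not.1 h
      exact hf i
  rw [← Fintype.sum_prod_type', ← Fintype.sum_subtype_add_sum_subtype (fun p => p.1 ≠ p.2) f,
    hdiag, add_zero]

theorem sum_sum_mul_of_sum_eq_zero {ι : Type*} [Fintype ι] {u : ι → ℝ} (hu : ∑ i, u i = 0)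
    (α β γ δ : ℝ) : ∑ i, ∑ j, (α * u i + β * u j) * (γ * u i + δ * u j)
      = Fintype.card ι * (α * γ + β * δ) * (u ⬝ᵥ u) := by
  have h : ∀ i j, (α * u i + β * u j) * (γ * u i + δ * u j)
      = α * γ * (u i * u i) + α * δ * u i * u j + β * γ * u i * u j + β * δ * (u j * u j) := by
    intro i j; ring
  simp only [h, Finset.sum_add_distrib, Finset.sum_const, Finset.card_univ, nsmul_eq_mul,
    ← Finset.mul_sum, hu, mul_zero, add_zero, dotProduct]
  ring

theorem sq_le_mul_of_forall_quadratic_nonneg {K : Type*} [Field K] [LinearOrder K]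
    [IsStrictOrderedRing K] {a b c : K} (h : ∀ s, 0 ≤ a * s ^ 2 + 2 * b * s + c) :
    b ^ 2 ≤ a * c := by
  have := discrim_le_zero (a := a) (b := 2 * b) (c := c) fun s => by rw [← sq]; exact h s
  rw [discrim] at this
  nlinarith

namespace OmegaE

variable {n : ℕ} {η₁ η₂ η₃ η₄ η₅ : ℝ}

-- The `η₃`, `η₄` and `η₅` indicators also fire at `q = p` and at `q = (p.2, p.1)`; the first two
-- coefficients compensate for this.
def entry (η₁ η₂ η₃ η₄ η₅ : ℝ) (p q : Fin n × Fin n) : ℝ :=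
  (η₁ - η₃ - η₄) * (if q.1 = p.1 ∧ q.2 = p.2 then 1 else 0)
    + (η₂ - 2 * η₅) * (if q.1 = p.2 ∧ q.2 = p.1 then 1 else 0)
    + η₃ * (if q.1 = p.1 then 1 else 0) + η₄ * (if q.2 = p.2 then 1 else 0)
    + η₅ * ((if q.1 = p.2 then 1 else 0) + (if q.2 = p.1 then 1 else 0))

theorem apply_eq_entry (p q : {p : Fin n × Fin n // p.1 ≠ p.2}) :
    OmegaE n η₁ η₂ η₃ η₄ η₅ p q = entry η₁ η₂ η₃ η₄ η₅ p.1 q.1 := by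
  obtain ⟨⟨i, j⟩, hij : i ≠ j⟩ := p
  obtain ⟨⟨k, l⟩, hkl : k ≠ l⟩ := q
  simp only [OmegaE, entry, Subtype.mk.injEq, Prod.mk.injEq]
  split_ifs <;> grind

def offDiagVec (x : Matrix (Fin n) (Fin n) ℝ) : {p : Fin n × Fin n // p.1 ≠ p.2} → ℝ :=
  fun p => x p.1.1 p.1.2

theorem mulVec_offDiagVec {x : Matrix (Fin n) (Fin n) ℝ} (hx : ∀ i, x i i = 0) :
    OmegaE n η₁ η₂ η₃ η₄ η₅ *ᵥ offDiagVec x = offDiagVec (of fun i j =>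
      (η₁ - η₃ - η₄) * x i j + (η₂ - 2 * η₅) * x j i + η₃ * (x *ᵥ 1) i + η₄ * (xᵀ *ᵥ 1) j
        + η₅ * ((x *ᵥ 1) j + (xᵀ *ᵥ 1) i)) := by
  ext p
  simp only [mulVec, dotProduct, apply_eq_entry, offDiagVec]
  rw [sum_subtype_fst_ne_snd (f := fun q => entry η₁ η₂ η₃ η₄ η₅ p q * x q.1 q.2)
    (by simp [hx])]
  simp [entry, add_mul, mul_add, Finset.sum_add_distrib, ite_and, Finset.mul_sum]

theorem offDiagVec_dotProduct_offDiagVec {x : Matrix (Fin n) (Fin n) ℝ} (hx : ∀ i, x i i = 0)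
    (y : Matrix (Fin n) (Fin n) ℝ) : offDiagVec x ⬝ᵥ offDiagVec y = ∑ i, ∑ j, x i j * y i j :=
  sum_subtype_fst_ne_snd (f := fun q => x q.1 q.2 * y q.1 q.2) (by simp [hx])

def quadForm (η₁ η₂ η₃ η₄ η₅ : ℝ) (x : Matrix (Fin n) (Fin n) ℝ) : ℝ :=
  (η₁ - η₃ - η₄) * trace (x * xᵀ) + (η₂ - 2 * η₅) * trace (x * x)
    + η₃ * (x *ᵥ 1 ⬝ᵥ x *ᵥ 1) + η₄ * (xᵀ *ᵥ 1 ⬝ᵥ xᵀ *ᵥ 1) + 2 * η₅ * (x *ᵥ 1 ⬝ᵥ xᵀ *ᵥ 1)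

theorem offDiagVec_dotProduct_mulVec {x : Matrix (Fin n) (Fin n) ℝ} (hx : ∀ i, x i i = 0) :
    offDiagVec x ⬝ᵥ (OmegaE n η₁ η₂ η₃ η₄ η₅ *ᵥ offDiagVec x) = quadForm η₁ η₂ η₃ η₄ η₅ x := by
  rw [mulVec_offDiagVec hx, offDiagVec_dotProduct_offDiagVec hx]
  have hrow : ∑ i, ∑ j, x i j * (x *ᵥ 1) i = x *ᵥ 1 ⬝ᵥ x *ᵥ 1 := by
    simp [dotProduct, mulVec, Finset.sum_mul]
  have hcol : ∑ i, ∑ j, x i j * (xᵀ *ᵥ 1) j = xᵀ *ᵥ 1 ⬝ᵥ xᵀ *ᵥ 1 := by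
    rw [Finset.sum_comm]; simp [dotProduct, mulVec, Finset.sum_mul]
  have hrowcol : ∑ i, ∑ j, x i j * (xᵀ *ᵥ 1) i = x *ᵥ 1 ⬝ᵥ xᵀ *ᵥ 1 := by
    simp [dotProduct, mulVec, Finset.sum_mul]
  have hcolrow : ∑ i, ∑ j, x i j * (x *ᵥ 1) j = x *ᵥ 1 ⬝ᵥ xᵀ *ᵥ 1 := by
    rw [Finset.sum_comm, dotProduct_comm]; simp [dotProduct, mulVec, Finset.sum_mul]
  have htrace : ∀ y : Matrix (Fin n) (Fin n) ℝ, ∑ i, ∑ j, x i j * y j i = trace (x * y) := by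
    simp [trace, mul_apply]
  simp only [of_apply, mul_add, Finset.sum_add_distrib, mul_left_comm (x _ _), ← Finset.mul_sum,
    hrow, hcol, hrowcol, hcolrow, ← htrace, transpose_apply, quadForm]
  ring

theorem quadForm_nonneg (hΩ : (OmegaE n η₁ η₂ η₃ η₄ η₅).PosSemidef)
    {x : Matrix (Fin n) (Fin n) ℝ} (hx : ∀ i, x i i = 0) : 0 ≤ quadForm η₁ η₂ η₃ η₄ η₅ x := by
  simpa [offDiagVec_dotProduct_mulVec hx] using hΩ.dotProduct_mulVec_nonneg (offDiagVec x)

def mapPairs {m : ℕ} (f : Fin m ↪ Fin n) (p : {p : Fin m × Fin m // p.1 ≠ p.2}) :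
    {p : Fin n × Fin n // p.1 ≠ p.2} :=
  ⟨(f p.1.1, f p.1.2), f.injective.ne p.2⟩

theorem submatrix_mapPairs {m : ℕ} (f : Fin m ↪ Fin n) :
    (OmegaE n η₁ η₂ η₃ η₄ η₅).submatrix (mapPairs f) (mapPairs f) = OmegaE m η₁ η₂ η₃ η₄ η₅ := by
  ext p q
  simp [OmegaE, mapPairs, Subtype.ext_iff, Prod.ext_iff]

theorem posSemidef_of_le {m : ℕ} (hΩ : (OmegaE n η₁ η₂ η₃ η₄ η₅).PosSemidef) (hmn : m ≤ n) :
    (OmegaE m η₁ η₂ η₃ η₄ η₅).PosSemidef :=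
  submatrix_mapPairs (Fin.castLEEmb hmn) ▸ hΩ.submatrix _

theorem abs_le_of_posSemidef_two (hΩ : (OmegaE 2 η₁ η₂ η₃ η₄ η₅).PosSemidef) : |η₂| ≤ η₁ := by
  have hsymm := quadForm_nonneg hΩ (x := !![0, 1; 1, 0]) (fun i => by fin_cases i <;> rfl)
  have hanti := quadForm_nonneg hΩ (x := !![0, 1; -1, 0]) (fun i => by fin_cases i <;> rfl)
  simp [quadForm, trace, Fin.sum_univ_two, dotProduct, mulVec, vecMul] at hsymm hanti
  exact abs_le.2 ⟨by linarith, by linarith⟩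

theorem le_of_posSemidef_three (hΩ : (OmegaE 3 η₁ η₂ η₃ η₄ η₅).PosSemidef) :
    (-η₁ + η₂ + η₃ + η₄) / 2 ≤ η₅ := by
  have := quadForm_nonneg hΩ (x := !![0, 1, -1; -1, 0, 1; 1, -1, 0])
    (fun i => by fin_cases i <;> rfl)
  simp [quadForm, trace, Fin.sum_univ_three, dotProduct, mulVec, vecMul] at this
  linarith

theorem le_of_posSemidef_four (hΩ : (OmegaE 4 η₁ η₂ η₃ η₄ η₅).PosSemidef) :
    η₅ ≤ (η₁ + η₂ - η₃ - η₄) / 2 := by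
  have := quadForm_nonneg hΩ (x := !![0, 1, 0, -1; 1, 0, -1, 0; 0, -1, 0, 1; -1, 0, 1, 0])
    (fun i => by fin_cases i <;> rfl)
  simp [quadForm, trace, Fin.sum_univ_four, dotProduct, mulVec, vecMul] at this
  linarith

theorem quadForm_offDiag_ones :
    quadForm η₁ η₂ η₃ η₄ η₅ (of fun i j : Fin n => if i = j then 0 else 1)
      = n * (n - 1) * (η₁ + η₂ + (n - 2) * (η₃ + η₄) + 2 * (n - 2) * η₅) := by
  set x : Matrix (Fin n) (Fin n) ℝ := of fun i j => if i = j then 0 else 1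
  have hrow : x *ᵥ 1 = fun _ => (n : ℝ) - 1 := by
    ext i; simp [x, mulVec, dotProduct, sum_ite_eq_zero_else]
  have hcol : xᵀ *ᵥ 1 = fun _ => (n : ℝ) - 1 := by
    ext i; simp [x, mulVec, dotProduct, sum_ite_eq_zero_else']
  have htrace₁ : trace (x * xᵀ) = n * (n - 1) := by
    simp only [x, trace, diag_apply, mul_apply, of_apply, transpose_apply, mul_ite, mul_zero,
      mul_one, sum_ite_eq_zero_else, Finset.sum_const, Finset.card_univ, Fintype.card_fin,
      nsmul_eq_mul, ↓reduceIte, sub_zero]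
  have htrace₂ : trace (x * x) = n * (n - 1) := by
    simp only [x, trace, diag_apply, mul_apply, of_apply, eq_comm, mul_ite, mul_zero, mul_one,
      sum_ite_eq_zero_else, Finset.sum_const, Finset.card_univ, Fintype.card_fin, nsmul_eq_mul,
      ↓reduceIte, sub_zero]
  simp only [quadForm, htrace₁, htrace₂, hrow, hcol, dotProduct, Finset.sum_const,
    Finset.card_univ, Fintype.card_fin, nsmul_eq_mul]
  ring

theorem quadForm_offDiag_add {u : Fin n → ℝ} (hu : ∑ i, u i = 0) (s t : ℝ) :
    quadForm η₁ η₂ η₃ η₄ η₅ (of fun i j => if i = j then 0 else s * u i + t * u j)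
      = (u ⬝ᵥ u) * ((η₁ - η₃ - η₄) * ((n - 1) * (s ^ 2 + t ^ 2) - 2 * s * t)
        + (η₂ - 2 * η₅) * (2 * n * s * t - (s + t) ^ 2)
        + η₃ * ((n - 1) * s - t) ^ 2 + η₄ * ((n - 1) * t - s) ^ 2
        + 2 * η₅ * ((n - 1) * s - t) * ((n - 1) * t - s)) := by
  set x : Matrix (Fin n) (Fin n) ℝ := of fun i j => if i = j then 0 else s * u i + t * u j
  have hrow : x *ᵥ 1 = ((n - 1) * s - t) • u := by
    ext i
    simp only [x, mulVec, dotProduct, of_apply, Pi.one_apply, mul_one, sum_ite_eq_zero_else,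
      Finset.sum_add_distrib, Finset.sum_const, Finset.card_univ, Fintype.card_fin, nsmul_eq_mul,
      ← Finset.mul_sum, hu, mul_zero, add_zero, Pi.smul_apply, smul_eq_mul]
    ring
  have hcol : xᵀ *ᵥ 1 = ((n - 1) * t - s) • u := by
    ext i
    simp only [x, mulVec, dotProduct, transpose_apply, of_apply, Pi.one_apply, mul_one,
      sum_ite_eq_zero_else', Finset.sum_add_distrib, ← Finset.mul_sum, hu, mul_zero,
      Finset.sum_const, Finset.card_univ, Fintype.card_fin, nsmul_eq_mul, zero_add,
      Pi.smul_apply, smul_eq_mul]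
    ring
  have hdiag : ∀ α β γ δ : ℝ,
      ∑ i, (α * u i + β * u i) * (γ * u i + δ * u i) = (α + β) * (γ + δ) * (u ⬝ᵥ u) := by
    intro α β γ δ
    rw [dotProduct, Finset.mul_sum]
    exact Finset.sum_congr rfl fun i _ => by ring
  have hxx : ∀ i j, x i j * x j i
      = if i = j then 0 else (s * u i + t * u j) * (t * u i + s * u j) := by
    intro i j
    rcases eq_or_ne i j with rfl | h
    · simp [x]
    · simp only [x, of_apply, if_neg h, if_neg h.symm]
      ring
  have htrace₁ : trace (x * xᵀ) = ((n - 1) * (s ^ 2 + t ^ 2) - 2 * s * t) * (u ⬝ᵥ u) := by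
    simp only [x, trace, diag_apply, mul_apply, of_apply, transpose_apply, mul_ite, mul_zero,
      ite_mul, zero_mul, sum_ite_eq_zero_else, ↓reduceIte, sub_zero, Finset.sum_sub_distrib,
      sum_sum_mul_of_sum_eq_zero hu, Fintype.card_fin, hdiag]
    ring
  have htrace₂ : trace (x * x) = (2 * n * s * t - (s + t) ^ 2) * (u ⬝ᵥ u) := by
    simp only [trace, diag_apply, mul_apply, hxx, sum_ite_eq_zero_else, Finset.sum_sub_distrib,
      sum_sum_mul_of_sum_eq_zero hu, Fintype.card_fin, hdiag]
    ring
  simp only [quadForm, htrace₁, htrace₂, hrow, hcol, dotProduct_smul, smul_dotProduct,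
    dotProduct_comm u, smul_eq_mul]
  ring

theorem sum_nonneg_of_posSemidef (hΩ : (OmegaE n η₁ η₂ η₃ η₄ η₅).PosSemidef) (hn : 2 ≤ n) :
    0 ≤ η₁ + η₂ + (n - 2) * (η₃ + η₄) + 2 * (n - 2) * η₅ := by
  have h := quadForm_nonneg hΩ (x := of fun i j => if i = j then 0 else 1) (by simp)
  rw [quadForm_offDiag_ones] at h
  have hn' : (2 : ℝ) ≤ n := by exact_mod_cast hn
  exact nonneg_of_mul_nonneg_right h (by nlinarith)

theorem sq_le_mul_of_posSemidef (hΩ : (OmegaE n η₁ η₂ η₃ η₄ η₅).PosSemidef) (hn : 2 ≤ n) :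
    (-η₁ + (n - 1) * η₂ - (n - 2) * (η₃ + η₄) + (n - 2) ^ 2 * η₅) ^ 2
      ≤ ((n - 1) * η₁ - η₂ + (n - 1) * (n - 2) * η₃ - (n - 2) * η₄ - 2 * (n - 2) * η₅)
        * ((n - 1) * η₁ - η₂ - (n - 2) * η₃ + (n - 1) * (n - 2) * η₄ - 2 * (n - 2) * η₅) := by
  set u : Fin n → ℝ := Pi.single ⟨0, by omega⟩ 1 - Pi.single ⟨1, by omega⟩ 1
  have hu : ∑ i, u i = 0 := by simp [u, Finset.sum_sub_distrib]
  have huu : u ⬝ᵥ u = 2 := by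
    simp only [u, dotProduct_sub, dotProduct_single, Pi.sub_apply, Pi.single_eq_same, ne_eq,
      Fin.ext_iff, zero_ne_one, one_ne_zero, not_false_eq_true, Pi.single_eq_of_ne, sub_zero,
      mul_one, zero_sub, sub_neg_eq_add]
    norm_num
  refine sq_le_mul_of_forall_quadratic_nonneg fun s => ?_
  have h := quadForm_nonneg hΩ (x := of fun i j => if i = j then 0 else s * u i + 1 * u j)
    (by simp)
  rw [quadForm_offDiag_add hu, huu] at h
  linear_combination h / 2

end OmegaE

/-- **Necessary conditions on `η` for the non-negative definiteness of `Ω_e`**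
(the paper's parameter space `𝓜ⁿ(η₁,…,η₅)`). -/
theorem posSemidef_OmegaE_param_space
    (n : ℕ) (hn : 4 ≤ n) (η₁ η₂ η₃ η₄ η₅ : ℝ)
    (hΩ : (OmegaE n η₁ η₂ η₃ η₄ η₅).PosSemidef) :
    0 ≤ η₁ ∧
    -η₁ ≤ η₂ ∧ η₂ ≤ η₁ ∧
    η₅ ≥ -(η₃ + η₄) / 2 - (η₂ + η₁) / (2 * (n : ℝ) - 4) ∧
    η₅ ≤ (η₁ + η₂ - η₃ - η₄) / 2 ∧
    η₅ ≥ (-η₁ + η₂ + η₃ + η₄) / 2 ∧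
    (((n : ℝ) - 3) * (η₃ + η₄) - 2 * η₅ + 2 * η₁) ^ 2 ≥
      ((η₄ ^ 2 + η₃ ^ 2) * ((n : ℝ) ^ 2 - 2 * n + 1) + 4 * η₅ ^ 2 * ((n : ℝ) ^ 2 - 6 * n + 9)
          + 2 * η₃ * η₄ * (1 - (n : ℝ) ^ 2 + 2 * n))
        + (η₂ * η₅ * (8 * (n : ℝ) - 24) + (η₃ + η₄) * η₅ * (12 - 4 * (n : ℝ))
          + 4 * η₂ * (η₂ - (η₃ + η₄))) := by
  have hn' : (4 : ℝ) ≤ n := by exact_mod_cast hn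
  have h₂ := OmegaE.abs_le_of_posSemidef_two (OmegaE.posSemidef_of_le hΩ (by omega))
  have h₃ := OmegaE.le_of_posSemidef_three (OmegaE.posSemidef_of_le hΩ (by omega))
  have h₄ := OmegaE.le_of_posSemidef_four (OmegaE.posSemidef_of_le hΩ hn)
  have hsum := OmegaE.sum_nonneg_of_posSemidef hΩ (by omega)
  have hdisc := OmegaE.sq_le_mul_of_posSemidef hΩ (by omega)
  refine ⟨(abs_nonneg _).trans h₂, (abs_le.1 h₂).1, (abs_le.1 h₂).2, ?_, h₄, h₃, ?_⟩
  · have h2n : (0 : ℝ) < 2 * n - 4 := by linarith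
    have hsplit : η₁ + η₂ + (n - 2) * (η₃ + η₄) + 2 * (n - 2) * η₅
        = (η₂ + η₁) + (2 * n - 4) * ((η₃ + η₄) / 2 + η₅) := by ring
    have h := div_nonneg hsum h2n.le
    rw [hsplit, add_div, mul_div_cancel_left₀ _ h2n.ne'] at h
    linarith
  · rw [ge_iff_le, ← sub_nonneg]
    refine nonneg_of_mul_nonneg_right (a := (n : ℝ) * (n - 2)) ?_ (by nlinarith)
    linear_combination 4 * hdisc
end

section
/- Fix n ≥ 3 and let {ξ_{ij}}, for i ≠ j in {1,…,n}, be real random variables with E[ξ_{ij}⁴] ≤ L⁴ for all i ≠ j and some L < ∞, and which are dissociated in the sense that collections of entries indexed by disjoint node sets are independent. Let S_{3,n} = {(i,j,l) : i, j, l pairwise distinct in {1,…,n}}, so |S_{3,n}| = n(n−1)(n−2). Then there exists an absolute constant C (not depending on n or on the array) such that Var( |S_{3,n}|^{-1} Σ_{(i,j,l) ∈ S_{3,n}} ξ_{ij} ξ_{il} ) ≤ C L⁴ / n. -/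
/-!
Write the sum as `∑ₜ Yₜ` over the two-stars `Yₜ = ξ_{ij} ξ_{il}`, `t = (i, j, l)`, and expand
its variance into the covariances `Cov(Yₜ, Yₛ)`. By dissociation `Yₜ` and `Yₛ` are independent
as soon as the node sets of `t` and `s` are disjoint, so for each of the at most `n³` stars `t`
only the at most `9 n²` stars `s` meeting it contribute, each by at most `L⁴`
(AM–GM on fourth moments). The variance of the sum is thus `≤ 9 n⁵ L⁴`, and dividing by
`(n (n - 1) (n - 2))² ≍ n⁶` leaves `O(L⁴ / n)`.
-/

open MeasureTheory ProbabilityTheory Finset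
open scoped ENNReal

section Moments

variable {Ω : Type*} [MeasurableSpace Ω] {μ : Measure Ω} {X Y : Ω → ℝ}

instance ENNReal.HolderTriple.instFourFourTwo : ENNReal.HolderTriple 4 4 2 where
  inv_add_inv_eq_inv := by
    have := ENNReal.add_halves (2⁻¹ : ℝ≥0∞)
    rw [ENNReal.div_eq_inv_mul, ← ENNReal.mul_inv (by simp) (by simp)] at this
    norm_num at this
    exact this

lemma MeasureTheory.MemLp.integrable_pow_four (hX : MemLp X 4 μ) :
    Integrable (fun ω ↦ X ω ^ 4) μ := by
  simpa [Even.pow_abs (by decide : Even 4)] using hX.integrable_norm_pow (p := 4) (by norm_num)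

lemma covariance_le_half_variance_add [IsFiniteMeasure μ] (hX : MemLp X 2 μ) (hY : MemLp Y 2 μ) :
    cov[X, Y; μ] ≤ (Var[X; μ] + Var[Y; μ]) / 2 := by
  have := variance_sub hX hY
  linarith [variance_nonneg (X - Y) μ]

lemma variance_mul_le [IsProbabilityMeasure μ] (hX : MemLp X 4 μ) (hY : MemLp Y 4 μ) :
    Var[fun ω ↦ X ω * Y ω; μ] ≤ (∫ ω, X ω ^ 4 ∂μ + ∫ ω, Y ω ^ 4 ∂μ) / 2 := by
  have hXY : MemLp (fun ω ↦ X ω * Y ω) 2 μ := hY.mul' hX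
  calc Var[fun ω ↦ X ω * Y ω; μ] ≤ ∫ ω, (X ω * Y ω) ^ 2 ∂μ :=
        variance_le_expectation_sq hXY.aestronglyMeasurable
    _ ≤ ∫ ω, (X ω ^ 4 + Y ω ^ 4) / 2 ∂μ :=
        integral_mono hXY.integrable_sq
          ((hX.integrable_pow_four.add hY.integrable_pow_four).div_const 2)
          fun ω ↦ by nlinarith [sq_nonneg (X ω ^ 2 - Y ω ^ 2)]
    _ = _ := by rw [integral_div, integral_add hX.integrable_pow_four hY.integrable_pow_four]

lemma variance_sum_le_of_covariance_eq_zero {ι : Type*} [IsFiniteMeasure μ] {S : Finset ι}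
    {Z : ι → Ω → ℝ} (R : ι → ι → Prop) [DecidableRel R] {V : ℝ} {K : ℕ}
    (hZ : ∀ t ∈ S, MemLp (Z t) 2 μ) (hV : ∀ t ∈ S, Var[Z t; μ] ≤ V)
    (hR : ∀ t ∈ S, ∀ s ∈ S, ¬ R t s → cov[Z t, Z s; μ] = 0)
    (hK : ∀ t ∈ S, #(S.filter (R t)) ≤ K) :
    Var[fun ω ↦ ∑ t ∈ S, Z t ω; μ] ≤ #S * K * V := by
  rw [variance_fun_sum' hZ, mul_assoc, ← nsmul_eq_mul]
  refine sum_le_card_nsmul _ _ _ fun t ht ↦ ?_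
  have hV0 : 0 ≤ V := (variance_nonneg _ _).trans (hV t ht)
  rw [← sum_filter_add_sum_filter_not S (R t),
    sum_eq_zero (s := S.filter (¬ R t ·)) fun s hs ↦ by
      rw [mem_filter] at hs; exact hR t ht s hs.1 hs.2, add_zero]
  calc ∑ s ∈ S.filter (R t), cov[Z t, Z s; μ] ≤ #(S.filter (R t)) • V :=
        sum_le_card_nsmul _ _ _ fun s hs ↦ by
          have hs := (mem_filter.mp hs).1
          linarith [covariance_le_half_variance_add (hZ t ht) (hZ s hs), hV t ht, hV s hs]
    _ ≤ K * V := by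
        rw [nsmul_eq_mul]; exact mul_le_mul_of_nonneg_right (by exact_mod_cast hK t ht) hV0

end Moments

section Dissociated

variable {ι Ω : Type*} [MeasurableSpace Ω]

def IsDissociated (ξ : ι → ι → Ω → ℝ) (P : Measure Ω) : Prop :=
  ∀ A B : Finset ι, Disjoint A B →
    IndepFun
      (fun ω => fun p : {p : ι × ι // p.1 ≠ p.2 ∧ p.1 ∈ A ∧ p.2 ∈ A} => ξ p.1.1 p.1.2 ω)
      (fun ω => fun p : {p : ι × ι // p.1 ≠ p.2 ∧ p.1 ∈ B ∧ p.2 ∈ B} => ξ p.1.1 p.1.2 ω) P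

def starProduct (ξ : ι → ι → Ω → ℝ) (t : ι × ι × ι) : Ω → ℝ :=
  fun ω ↦ ξ t.1 t.2.1 ω * ξ t.1 t.2.2 ω

def IsStar (t : ι × ι × ι) : Prop := t.1 ≠ t.2.1 ∧ t.1 ≠ t.2.2

variable [DecidableEq ι]

def nodes (t : ι × ι × ι) : Finset ι := {t.1, t.2.1, t.2.2}

lemma IsDissociated.indepFun_starProduct {ξ : ι → ι → Ω → ℝ} {P : Measure Ω}
    (hξ : IsDissociated ξ P) {t s : ι × ι × ι} (ht : IsStar t) (hs : IsStar s)
    (hts : Disjoint (nodes t) (nodes s)) :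
    IndepFun (starProduct ξ t) (starProduct ξ s) P := by
  have factor : ∀ u, IsStar u →
      ∃ φ : ({p : ι × ι // p.1 ≠ p.2 ∧ p.1 ∈ nodes u ∧ p.2 ∈ nodes u} → ℝ) → ℝ,
        Measurable φ ∧ starProduct ξ u = φ ∘ fun ω p ↦ ξ p.1.1 p.1.2 ω := by
    rintro ⟨i, j, l⟩ ⟨hij, hil⟩
    exact ⟨fun v ↦ v ⟨(i, j), hij, by simp [nodes]⟩ * v ⟨(i, l), hil, by simp [nodes]⟩,
      by fun_prop, rfl⟩
  obtain ⟨φ, hφ, hφt⟩ := factor t ht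
  obtain ⟨ψ, hψ, hψs⟩ := factor s hs
  rw [hφt, hψs]
  exact (hξ _ _ hts).comp hφ hψ

end Dissociated

lemma card_filter_not_disjoint_nodes_le {ι : Type*} [Fintype ι] [DecidableEq ι]
    (S : Finset (ι × ι × ι)) (T : Finset ι) :
    #(S.filter fun s ↦ ¬ Disjoint T (nodes s)) ≤ 3 * #T * Fintype.card ι ^ 2 := by
  have hcover : S.filter (fun s ↦ ¬ Disjoint T (nodes s)) ⊆
      T ×ˢ univ ∪ univ ×ˢ T ×ˢ univ ∪ univ ×ˢ univ ×ˢ T := by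
    intro s hs
    obtain ⟨a, haT, has⟩ := not_disjoint_iff.mp (mem_filter.mp hs).2
    simp only [nodes, mem_insert, mem_singleton] at has
    rcases has with rfl | rfl | rfl <;> simp [haT]
  calc _ ≤ _ := card_le_card hcover
    _ ≤ _ := (card_union_le _ _).trans (add_le_add_left (card_union_le _ _) _)
    _ = 3 * #T * Fintype.card ι ^ 2 := by
      simp only [card_product, card_univ, Fintype.card_prod]; ring

-- `(N (N - 1) (N - 2))² ≥ 4 N⁶ / 81` for `N ≥ 3`, and `9 · 81 / 4 < 200`.
lemma inv_descFactorial_three_sq_mul_le {N : ℝ} (hN : 3 ≤ N) :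
    ((N * (N - 1) * (N - 2))⁻¹) ^ 2 * (N ^ 3 * (9 * N ^ 2)) ≤ 200 / N := by
  have hD : 0 < N * (N - 1) * (N - 2) := by
    have : 0 < N - 2 := by linarith
    have : 0 < N - 1 := by linarith
    positivity
  rw [inv_pow, inv_mul_le_iff₀ (by positivity), mul_div_assoc', le_div_iff₀ (by linarith)]
  nlinarith [sq_nonneg (N - 3), mul_nonneg (sub_nonneg.2 hN) (sq_nonneg N)]

/-- **Variance bound for the triple average in the estimator of `η₃`** (key step in the
proof of Theorem 2 of the paper). There is an absolute constant `C`, not depending on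
`n` or on the array, such that for every `n ≥ 3` and every dissociated array
`{ξ_{ij}}_{i≠j}` with `E[ξ_{ij}⁴] ≤ L⁴`,
`Var(|S₃ₙ|⁻¹ Σ_{(i,j,l) pairwise distinct} ξ_{ij} ξ_{il}) ≤ C L⁴ / n`. -/
theorem variance_bound_triple_average :
    ∃ C : ℝ, ∀ (n : ℕ), 3 ≤ n →
      ∀ (Ω : Type) [MeasurableSpace Ω] (P : Measure Ω) [IsProbabilityMeasure P]
        (ξ : Fin n → Fin n → Ω → ℝ) (L : ℝ),
        (∀ i j : Fin n, i ≠ j → MemLp (ξ i j) 4 P) →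
        (∀ i j : Fin n, i ≠ j → ∫ ω, (ξ i j ω) ^ 4 ∂P ≤ L ^ 4) →
        (∀ A B : Finset (Fin n), Disjoint A B →
          IndepFun
            (fun ω => fun p : {p : Fin n × Fin n // p.1 ≠ p.2 ∧ p.1 ∈ A ∧ p.2 ∈ A} =>
              ξ p.1.1 p.1.2 ω)
            (fun ω => fun p : {p : Fin n × Fin n // p.1 ≠ p.2 ∧ p.1 ∈ B ∧ p.2 ∈ B} =>
              ξ p.1.1 p.1.2 ω) P) →
        variance (fun ω => ((n : ℝ) * ((n : ℝ) - 1) * ((n : ℝ) - 2))⁻¹ *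
            ∑ t ∈ (Finset.univ : Finset (Fin n × Fin n × Fin n)).filter
                (fun t => t.1 ≠ t.2.1 ∧ t.1 ≠ t.2.2 ∧ t.2.1 ≠ t.2.2),
              ξ t.1 t.2.1 ω * ξ t.1 t.2.2 ω) P
          ≤ C * L ^ 4 / n := by
  refine ⟨200, fun n hn Ω _ P _ ξ L hξ hL hdis => ?_⟩
  set S := (univ : Finset (Fin n × Fin n × Fin n)).filter
    (fun t => t.1 ≠ t.2.1 ∧ t.1 ≠ t.2.2 ∧ t.2.1 ≠ t.2.2)
  have hstar : ∀ t ∈ S, IsStar t := fun t ht ↦ by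
    simp only [S, mem_filter] at ht; exact ⟨ht.2.1, ht.2.2.1⟩
  have hmem : ∀ t ∈ S, MemLp (starProduct ξ t) 2 P := fun t ht ↦
    (hξ _ _ (hstar t ht).2).mul' (hξ _ _ (hstar t ht).1)
  have hvar : ∀ t ∈ S, Var[starProduct ξ t; P] ≤ L ^ 4 := fun t ht ↦
    (variance_mul_le (hξ _ _ (hstar t ht).1) (hξ _ _ (hstar t ht).2)).trans
      (by linarith [hL _ _ (hstar t ht).1, hL _ _ (hstar t ht).2])
  have hsum : Var[fun ω ↦ ∑ t ∈ S, starProduct ξ t ω; P] ≤ #S * (9 * n ^ 2 : ℕ) * L ^ 4 := by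
    refine variance_sum_le_of_covariance_eq_zero (fun t s ↦ ¬ Disjoint (nodes t) (nodes s))
      hmem hvar (fun t ht s hs hts ↦ ?_) fun t _ ↦ ?_
    · exact (IsDissociated.indepFun_starProduct hdis (hstar t ht) (hstar s hs)
        (not_not.mp hts)).covariance_eq_zero (hmem t ht) (hmem s hs)
    · simpa [card_le_three] using
        (card_filter_not_disjoint_nodes_le S (nodes t)).trans
          (Nat.mul_le_mul_right _ (Nat.mul_le_mul_left 3 card_le_three))
  have hS : (#S : ℝ) ≤ n ^ 3 := by
    exact_mod_cast (card_filter_le _ _).trans_eq (by simp [pow_three])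
  rw [variance_const_mul]
  set c := ((n : ℝ) * (n - 1) * (n - 2))⁻¹
  calc c ^ 2 * _ ≤ c ^ 2 * (#S * (9 * n ^ 2 : ℕ) * L ^ 4) := by gcongr; exact hsum
    _ ≤ c ^ 2 * (n ^ 3 * (9 * n ^ 2) * L ^ 4) := by push_cast; gcongr
    _ ≤ 200 / n * L ^ 4 := by
        rw [← mul_assoc]
        exact mul_le_mul_of_nonneg_right
          (inv_descFactorial_three_sq_mul_le (by exact_mod_cast hn)) (by positivity)
    _ = _ := by ring
end
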